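/- Iteratively removing low-degree vertices from a graph of arboricity α terminates in at most ⌈log_β n⌉ rounds: define G₁ = G, let V_i be the vertices of degree at most 2βα in G_i, and G_{i+1} = G_i minus V_i; then G_i has at most n/β^{i-1} vertices, and V = V₁ ∪ ... ∪ V_τ with τ = ⌈log_β n⌉. -/

import Mathlib

open Finset
open scoped Classical

/-- The remaining vertex set after `i` rounds of peeling off vertices of degree
at most `2βα` in the current induced subgraph: `peel G α β 0 = V`, and
`peel G α β (i+1)` consists of the vertices of `peel G α β i` whose degree inside
`peel G α β i` exceeds `2βα`. The level sets are `Vᵢ = peel (i-1) \ peel i`. -/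
noncomputable def peel {V : Type*} [Fintype V] (G : SimpleGraph V) (α β : ℝ) :
    ℕ → Finset V
  | 0 => Finset.univ
  | (i + 1) =>
      (peel G α β i).filter
        (fun v => 2 * β * α < (((peel G α β i).filter (G.Adj v)).card : ℝ))

/-!
If every induced subgraph has average degree at most `2α`, then by Markov's inequality fewer
than a `1/β` fraction of the vertices of `peel i` have degree above `2βα` in it, so each round
shrinks the vertex set by a factor `β`. After `τ = ⌈log_β n⌉` rounds fewer than `n / β^τ ≤ 1`
vertices survive, and every vertex lies in the level set of the round in which it was removed.
-/

theorem mul_card_lt_card_of_sum_le {ι : Type*} {s t : Finset ι} {f : ι → ℝ} {a b : ℝ}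
    (ha : 0 ≤ a) (hf : ∀ i ∈ s, 0 ≤ f i) (hsum : ∑ i ∈ s, f i ≤ a * #s) (hts : t ⊆ s)
    (ht : t.Nonempty) (hlt : ∀ i ∈ t, b * a < f i) : b * #t < #s := by
  have key : a * (b * #t) < a * #s :=
    calc a * (b * #t) = ∑ _i ∈ t, b * a := by rw [sum_const, nsmul_eq_mul]; ring
      _ < ∑ i ∈ t, f i := sum_lt_sum_of_nonempty ht hlt
      _ ≤ ∑ i ∈ s, f i := sum_le_sum_of_subset_of_nonneg hts fun i hi _ => hf i hi
      _ ≤ a * #s := hsum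
  exact lt_of_mul_lt_mul_left key ha

theorem Finset.sdiff_subset_biUnion_range_sdiff {α : Type*} [DecidableEq α] (S : ℕ → Finset α)
    (n : ℕ) : S 0 \ S n ⊆ (range n).biUnion fun i => S i \ S (i + 1) := by
  induction n with
  | zero => simp
  | succ n ih =>
    intro v hv
    rw [mem_sdiff] at hv
    by_cases hvn : v ∈ S n
    · exact mem_biUnion.2 ⟨n, self_mem_range_succ n, mem_sdiff.2 ⟨hvn, hv.2⟩⟩
    · exact biUnion_subset_biUnion_of_subset_left _ (range_subset_range.2 n.le_succ)
        (ih (mem_sdiff.2 ⟨hv.1, hvn⟩))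

section Peel

variable {V : Type*} [Fintype V] (G : SimpleGraph V) (α β : ℝ)

theorem peel_succ_subset (i : ℕ) : peel G α β (i + 1) ⊆ peel G α β i :=
  filter_subset _ _

theorem lt_card_filter_adj_of_mem_peel_succ {i : ℕ} {v : V} (hv : v ∈ peel G α β (i + 1)) :
    2 * β * α < (#((peel G α β i).filter (G.Adj v)) : ℝ) :=
  (mem_filter.1 hv).2

variable {G α β}

theorem mul_card_peel_succ_lt (hα : 0 ≤ α)
    (havg : ∀ s : Finset V, ∑ v ∈ s, (#(s.filter (G.Adj v)) : ℝ) ≤ 2 * α * #s) {i : ℕ}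
    (hne : (peel G α β (i + 1)).Nonempty) :
    β * #(peel G α β (i + 1)) < #(peel G α β i) :=
  mul_card_lt_card_of_sum_le (by positivity) (fun _ _ => Nat.cast_nonneg _) (havg _)
    (peel_succ_subset G α β i) hne fun v hv => by
      linarith [lt_card_filter_adj_of_mem_peel_succ G α β hv]

theorem pow_mul_card_peel_le (hα : 0 ≤ α) (hβ : 0 ≤ β)
    (havg : ∀ s : Finset V, ∑ v ∈ s, (#(s.filter (G.Adj v)) : ℝ) ≤ 2 * α * #s) (i : ℕ) :
    β ^ i * #(peel G α β i) ≤ Fintype.card V := by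
  induction i with
  | zero => simp [peel]
  | succ i ih =>
    have hstep : β * #(peel G α β (i + 1)) ≤ #(peel G α β i) := by
      rcases eq_empty_or_nonempty (peel G α β (i + 1)) with hemp | hne
      · simp [hemp]
      · exact (mul_card_peel_succ_lt hα havg hne).le
    calc β ^ (i + 1) * #(peel G α β (i + 1)) = β ^ i * (β * #(peel G α β (i + 1))) := by ring
      _ ≤ β ^ i * #(peel G α β i) := by gcongr
      _ ≤ Fintype.card V := ih

theorem peel_succ_eq_empty (hα : 0 ≤ α) (hβ : 0 < β)
    (havg : ∀ s : Finset V, ∑ v ∈ s, (#(s.filter (G.Adj v)) : ℝ) ≤ 2 * α * #s) {i : ℕ}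
    (hcard : (Fintype.card V : ℝ) ≤ β ^ (i + 1)) : peel G α β (i + 1) = ∅ := by
  refine (eq_empty_or_nonempty _).resolve_right fun hne => ?_
  have hone : (1 : ℝ) ≤ #(peel G α β (i + 1)) := by exact_mod_cast hne.card_pos
  have : β ^ (i + 1) < Fintype.card V :=
    calc β ^ (i + 1) ≤ β ^ i * (β * #(peel G α β (i + 1))) := by
          rw [← mul_assoc, ← pow_succ]; exact le_mul_of_one_le_right (by positivity) hone
      _ < β ^ i * #(peel G α β i) := by gcongr; exact mul_card_peel_succ_lt hα havg hne
      _ ≤ Fintype.card V := pow_mul_card_peel_le hα hβ.le havg i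
  linarith

end Peel

/-- Iteratively removing low-degree vertices from a graph in which every induced
subgraph has average degree at most `2α` (e.g. a graph of arboricity `α`)
terminates in at most `⌈log_β n⌉` rounds: `peel G α β i` has at most `n / βⁱ`
vertices, `peel G α β ⌈log_β n⌉ = ∅`, and the level sets `Vᵢ` partition `V`. -/
theorem stmt_2 {V : Type*} [Fintype V] (G : SimpleGraph V) (α β : ℝ)
    (hα : 0 ≤ α) (hβ : 2 ≤ β) (hn : 2 ≤ Fintype.card V)
    (havg : ∀ s : Finset V,
      (∑ v ∈ s, (((s.filter (G.Adj v)).card : ℝ))) ≤ 2 * α * (s.card : ℝ)) :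
    (∀ i : ℕ, ((peel G α β i).card : ℝ) ≤ (Fintype.card V : ℝ) / β ^ i) ∧
    peel G α β ⌈Real.logb β (Fintype.card V)⌉₊ = ∅ ∧
    Finset.univ =
      (Finset.range ⌈Real.logb β (Fintype.card V)⌉₊).biUnion
        (fun i => peel G α β i \ peel G α β (i + 1)) := by
  have hβ0 : 0 < β := by linarith
  have hn1 : (1 : ℝ) < Fintype.card V := by exact_mod_cast hn
  set τ := ⌈Real.logb β (Fintype.card V)⌉₊
  have hτ : (Fintype.card V : ℝ) ≤ β ^ τ := by
    rw [← Real.rpow_natCast, ← Real.logb_le_iff_le_rpow (by linarith) (by linarith)]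
    exact Nat.le_ceil _
  obtain ⟨j, hj⟩ : ∃ j, τ = j + 1 :=
    Nat.exists_eq_succ_of_ne_zero (Nat.ceil_pos.2 (Real.logb_pos (by linarith) hn1)).ne'
  have hempty : peel G α β τ = ∅ := hj ▸ peel_succ_eq_empty hα hβ0 havg (hj ▸ hτ)
  refine ⟨fun i => ?_, hempty, ?_⟩
  · rw [le_div_iff₀' (by positivity)]
    exact pow_mul_card_peel_le hα hβ0.le havg i
  · refine Subset.antisymm ?_ (subset_univ _)
    simpa [peel, hempty] using sdiff_subset_biUnion_range_sdiff (peel G α β) τ
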